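/- Let D be a maximal ASPD on a finite set A with n = |A|. If a ∈ A and ω ∈ D satisfy ω(k) = a for some 1 ≤ k ≤ n, then for every 1 ≤ j ≤ k there exists ω' ∈ D with ω'(j) = a. -/

import Mathlib

variable {α : Type*} [DecidableEq α]

/-- Preferences (linear orders written as lists, most preferred first) on `A`. -/
def PrefOn (A : Finset α) : Set (List α) :=
  {l | l.Nodup ∧ l.toFinset = A}

/-- Restriction of a preference to a subset `T`. -/
def restrictPref (l : List α) (T : Finset α) : List α :=
  l.filter (fun a => decide (a ∈ T))

/-- Arrow's single-peaked domain on `A`: for every triple `T ⊆ A` some `x ∈ T`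
is never ranked last in the restriction of the domain to `T`. -/
def IsASPD (A : Finset α) (D : Set (List α)) : Prop :=
  D ⊆ PrefOn A ∧
    ∀ T : Finset α, T ⊆ A → T.card = 3 →
      ∃ x ∈ T, ∀ l ∈ D, (restrictPref l T).getLast? ≠ some x

/-- Maximal Arrow's single-peaked domain on `A`. -/
def IsMaximalASPD (A : Finset α) (D : Set (List α)) : Prop :=
  IsASPD A D ∧ ∀ l ∈ PrefOn A, l ∉ D → ¬ IsASPD A (insert l D)

/-! It suffices to move `a` up by one place. Write the preference as `Q ++ a :: s` and call
`e` *blocked* in `B = Q ∪ {a}` if some triple `T ⊆ B` containing `e` has both other elements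
ranked last on `T` somewhere in `D`, so that `e` is the only possible never-last element of `T`.
Moving an unblocked `e ∈ Q` to just below `a` changes the last element on a triple `T` only
when `T ⊆ B` and `e` becomes last, so the new preference keeps the domain an ASPD and, by
maximality, lies in `D`. The lowest element of `B` in any preference of `D` is unblocked, so one
needs a preference where that is not `a`; a triple blocking the lowest element of `Q` in `l`
must contain `a` together with an element ranked below `a` in some preference of `D`. -/

theorem List.getLast?_filter_of_getLast? {β : Type*} {p : β → Bool} {l : List β} {w : β}
    (hw : l.getLast? = some w) (hpw : p w) : (l.filter p).getLast? = some w := by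
  obtain ⟨ys, rfl⟩ := List.getLast?_eq_some_iff.1 hw
  simp [hpw]

theorem List.getLast?_filter_move_past {β : Type*} (p : β → Bool) (Q₁ Q₂ s : List β)
    (a e : β) :
    ((Q₁ ++ Q₂ ++ a :: e :: s).filter p).getLast? =
        ((Q₁ ++ e :: Q₂ ++ a :: s).filter p).getLast? ∨
      ((Q₁ ++ Q₂ ++ a :: e :: s).filter p).getLast? = some e ∧ ∀ x ∈ s, p x = false := by
  rw [show Q₁ ++ Q₂ ++ a :: e :: s = (Q₁ ++ Q₂ ++ [a, e]) ++ s by simp,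
    show Q₁ ++ e :: Q₂ ++ a :: s = (Q₁ ++ e :: Q₂ ++ [a]) ++ s by simp,
    List.filter_append (l₂ := s), List.filter_append (l₂ := s)]
  by_cases hs : s.filter p = []
  · rw [hs, List.append_nil, List.append_nil]
    cases he : p e
    · left
      simp [List.filter_append, he]
    · exact Or.inr ⟨List.getLast?_filter_of_getLast? (by simp) he, by simpa using hs⟩
  · left
    rw [List.getLast?_append_of_ne_nil _ hs, List.getLast?_append_of_ne_nil _ hs]

theorem List.perm_move_past {β : Type*} (Q₁ Q₂ s : List β) (a e : β) :
    (Q₁ ++ e :: Q₂ ++ a :: s).Perm (Q₁ ++ Q₂ ++ a :: e :: s) := by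
  simpa using List.perm_middle (l₁ := Q₂ ++ [a]) (a := e) (l₂ := s) |>.symm |>.append_left Q₁

theorem List.exists_append_cons_of_getElem? {β : Type*} {l : List β} {n : ℕ} {a : β}
    (h : l[n]? = some a) : ∃ l₁ l₂, l = l₁ ++ a :: l₂ ∧ l₁.length = n := by
  obtain ⟨hn, rfl⟩ := List.getElem?_eq_some_iff.1 h
  exact ⟨l.take n, l.drop (n + 1), by simp, by simp; omega⟩

theorem restrictPref_restrictPref {l : List α} {B T : Finset α} (hTB : T ⊆ B) :
    restrictPref (restrictPref l B) T = restrictPref l T := by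
  simp only [restrictPref, List.filter_filter]
  refine List.filter_congr fun x _ => ?_
  by_cases hx : x ∈ T
  · simp [hx, hTB hx]
  · simp [hx]

theorem getLast?_restrictPref_of_subset {σ : List α} {B T : Finset α} {w : α} (hTB : T ⊆ B)
    (hw : (restrictPref σ B).getLast? = some w) (hwT : w ∈ T) :
    (restrictPref σ T).getLast? = some w := by
  rw [← restrictPref_restrictPref hTB]
  exact List.getLast?_filter_of_getLast? hw (by simpa using hwT)

theorem mem_of_getLast?_restrictPref {σ : List α} {B : Finset α} {w : α}
    (hw : (restrictPref σ B).getLast? = some w) : w ∈ B := by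
  simpa using (List.mem_filter.1 (List.mem_of_getLast? hw)).2

theorem exists_getLast?_restrictPref {A B : Finset α} {σ : List α} (hσ : σ ∈ PrefOn A)
    (hBA : B ⊆ A) {x : α} (hxB : x ∈ B) : ∃ w, (restrictPref σ B).getLast? = some w := by
  have hx : x ∈ restrictPref σ B := by
    rw [restrictPref, List.mem_filter, ← List.mem_toFinset, hσ.2]
    exact ⟨hBA hxB, by simpa using hxB⟩
  exact Option.isSome_iff_exists.1 (List.getLast?_isSome.2 (List.ne_nil_of_mem hx))

def Blocked (D : Set (List α)) (B : Finset α) (e : α) : Prop :=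
  ∃ T ⊆ B, T.card = 3 ∧ e ∈ T ∧ ∀ x ∈ T.erase e, ∃ σ ∈ D, (restrictPref σ T).getLast? = some x

section

variable {A : Finset α} {D : Set (List α)}

theorem IsASPD.not_blocked_of_getLast? (hD : IsASPD A D) {B : Finset α} (hBA : B ⊆ A)
    {σ : List α} (hσ : σ ∈ D) {w : α} (hw : (restrictPref σ B).getLast? = some w) :
    ¬ Blocked D B w := by
  rintro ⟨T, hTB, hT3, hwT, hlast⟩
  obtain ⟨x, hxT, hx⟩ := hD.2 T (hTB.trans hBA) hT3
  by_cases hxw : x = w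
  · exact hx σ hσ (hxw ▸ getLast?_restrictPref_of_subset hTB hw hwT)
  · obtain ⟨τ, hτ, hτx⟩ := hlast x (Finset.mem_erase.2 ⟨hxw, hxT⟩)
    exact hx τ hτ hτx

theorem IsASPD.exists_not_blocked (hD : IsASPD A D) {Q s : List α} {a : α}
    (hl : Q ++ a :: s ∈ D) (hQ : Q ≠ []) : ∃ e ∈ Q, ¬ Blocked D (insert a Q.toFinset) e := by
  obtain ⟨hnd, hA⟩ := hD.1 hl
  have hBA : insert a Q.toFinset ⊆ A := by
    rw [← hA]
    intro x
    simp only [Finset.mem_insert, List.mem_toFinset, List.mem_append, List.mem_cons]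
    tauto
  have hdisj : ∀ x ∈ a :: s, x ∉ Q := fun x hx hxQ => List.disjoint_of_nodup_append hnd hxQ hx
  have haQ : a ∉ Q := hdisj a List.mem_cons_self
  by_contra! hblocked
  obtain ⟨T, hTB, hT3, hbT, hlast⟩ := hblocked _ (List.getLast_mem hQ)
  by_cases haT : a ∈ T
  · obtain ⟨v, hv⟩ : ((T.erase (Q.getLast hQ)).erase a).Nonempty := by
      rw [← Finset.card_pos, Finset.card_erase_of_mem, Finset.card_erase_of_mem hbT, hT3]
      · omega
      · exact Finset.mem_erase.2 ⟨fun h => haQ (h ▸ List.getLast_mem hQ), haT⟩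
    obtain ⟨σ, hσ, hσv⟩ := hlast v (Finset.mem_of_mem_erase hv)
    obtain ⟨w, hw⟩ := exists_getLast?_restrictPref (hD.1 hσ) hBA (Finset.mem_insert_self a _)
    have hwa : w ≠ a := by
      rintro rfl
      have := getLast?_restrictPref_of_subset hTB hw haT
      rw [hσv, Option.some_inj] at this
      exact (Finset.ne_of_mem_erase hv) this
    have hwQ : w ∈ Q :=
      List.mem_toFinset.1 ((Finset.mem_insert.1 (mem_of_getLast?_restrictPref hw)).resolve_left hwa)
    exact hD.not_blocked_of_getLast? hBA hσ hw (hblocked w hwQ)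
  · have hTQ : T ⊆ Q.toFinset := fun x hx =>
      (Finset.mem_insert.1 (hTB hx)).resolve_left (by rintro rfl; exact haT hx)
    have hlQ : (restrictPref (Q ++ a :: s) Q.toFinset).getLast? = some (Q.getLast hQ) := by
      have hQQ : Q.filter (fun x => decide (x ∈ Q.toFinset)) = Q := List.filter_eq_self.2 (by simp)
      have hs : (a :: s).filter (fun x => decide (x ∈ Q.toFinset)) = [] :=
        List.filter_eq_nil_iff.2 fun x hx => by simpa using hdisj x hx
      rw [restrictPref, List.filter_append, hQQ, hs, List.append_nil,
        List.getLast?_eq_some_getLast hQ]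
    exact hD.not_blocked_of_getLast? ((Finset.subset_insert _ _).trans hBA) hl hlQ
      ⟨T, hTQ, hT3, hbT, hlast⟩

theorem IsASPD.insert_move_past (hD : IsASPD A D) {Q₁ Q₂ s : List α} {a e : α}
    (hl : Q₁ ++ e :: Q₂ ++ a :: s ∈ D) (he : ¬ Blocked D (insert a (Q₁ ++ e :: Q₂).toFinset) e) :
    IsASPD A (insert (Q₁ ++ Q₂ ++ a :: e :: s) D) := by
  obtain ⟨hnd, hA⟩ := hD.1 hl
  have hperm := List.perm_move_past Q₁ Q₂ s a e
  have hτ : Q₁ ++ Q₂ ++ a :: e :: s ∈ PrefOn A :=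
    ⟨hperm.nodup_iff.1 hnd, (List.toFinset_eq_of_perm _ _ hperm).symm.trans hA⟩
  refine ⟨Set.insert_subset hτ hD.1, fun T hTA hT3 => ?_⟩
  rcases List.getLast?_filter_move_past (fun x => decide (x ∈ T)) Q₁ Q₂ s a e with
    heq | ⟨hlast, hs⟩
  · obtain ⟨x, hxT, hx⟩ := hD.2 T hTA hT3
    refine ⟨x, hxT, ?_⟩
    rintro σ (rfl | hσ)
    · rw [restrictPref, heq]
      exact hx _ hl
    · exact hx σ hσ
  · have hTB : T ⊆ insert a (Q₁ ++ e :: Q₂).toFinset := by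
      intro x hx
      have hxl : x ∈ Q₁ ++ e :: Q₂ ++ a :: s := by rw [← List.mem_toFinset, hA]; exact hTA hx
      have hxs : x ∉ s := fun h => by simpa [hx] using hs x h
      simp only [List.mem_append, List.mem_cons] at hxl
      simp only [Finset.mem_insert, List.mem_toFinset, List.mem_append, List.mem_cons]
      tauto
    have heT : e ∈ T := mem_of_getLast?_restrictPref hlast
    obtain ⟨x, hxe, hx⟩ : ∃ x ∈ T.erase e, ∀ σ ∈ D, (restrictPref σ T).getLast? ≠ some x := by
      by_contra! h
      exact he ⟨T, hTB, hT3, heT, h⟩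
    refine ⟨x, Finset.mem_of_mem_erase hxe, ?_⟩
    rintro σ (rfl | hσ)
    · rw [restrictPref, hlast, Ne, Option.some_inj]
      exact (Finset.ne_of_mem_erase hxe).symm
    · exact hx σ hσ

theorem IsMaximalASPD.mem_of_isASPD_insert (hD : IsMaximalASPD A D) {l : List α}
    (h : IsASPD A (insert l D)) : l ∈ D := by
  by_contra hl
  exact hD.2 l (h.1 (Set.mem_insert l D)) hl h

theorem IsMaximalASPD.exists_getElem?_eq_of_succ (hD : IsMaximalASPD A D) {l : List α}
    (hl : l ∈ D) {p : ℕ} {a : α} (h : l[p + 1]? = some a) : ∃ l' ∈ D, l'[p]? = some a := by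
  obtain ⟨Q, s, rfl, hQ⟩ := List.exists_append_cons_of_getElem? h
  obtain ⟨e, heQ, he⟩ := hD.1.exists_not_blocked hl (List.ne_nil_of_length_pos (by omega))
  obtain ⟨Q₁, Q₂, rfl⟩ := List.append_of_mem heQ
  refine ⟨_, hD.mem_of_isASPD_insert (hD.1.insert_move_past hl he), ?_⟩
  have hlen : (Q₁ ++ Q₂).length = p := by
    simp only [List.length_append, List.length_cons] at hQ ⊢
    omega
  rw [List.getElem?_append_right hlen.le, hlen, Nat.sub_self]
  rfl

end

/-- If an alternative appears at (0-based) position `k` in some preference of a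
maximal Arrow's single-peaked domain, then it also appears at every earlier
position `j ≤ k` in some preference of the domain. -/
theorem maximal_aspd_higher_ranking (A : Finset α) (D : Set (List α))
    (hD : IsMaximalASPD A D) (a : α) (l : List α) (hl : l ∈ D)
    (k : ℕ) (hk : l[k]? = some a) :
    ∀ j ≤ k, ∃ l' ∈ D, l'[j]? = some a := by
  intro j hj
  induction k, hj using Nat.le_induction generalizing l with
  | base => exact ⟨l, hl, hk⟩
  | succ k _ ih =>
    obtain ⟨l', hl', hk'⟩ := hD.exists_getElem?_eq_of_succ hl hk
    exact ih l' hl' hk'
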